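/- arXiv:2208.14481 — 6 statements merged into one kernel-verified Lean document; each statement's English description precedes it below -/
import Mathlib

section
/- Let T be a weighted binary tree and x a non-root node of T. Then c(T^x) < c(T) if and only if μ(x,T) > 0, and c(T^x) = c(T) if and only if μ(x,T) = 0. -/
/-- Binary trees storing a value (e.g. a weight) at every internal node. -/
inductive BTree (α : Type) where
  | leaf : BTree α
  | node : BTree α → α → BTree α → BTree α

namespace BTree

/-- The subtree of `t` rooted at the node addressed by the path `p`
(`false` = go left, `true` = go right); `none` if no such node. -/
def subtreeAt {α : Type} : BTree α → List Bool → Option (BTree α)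
  | t, [] => some t
  | leaf, _ :: _ => none
  | node l _ _, false :: p => subtreeAt l p
  | node _ _ r, true :: p => subtreeAt r p

/-- The value stored at the node of `t` addressed by `p`, if it exists. -/
def weightAt {α : Type} (t : BTree α) (p : List Bool) : Option α :=
  match subtreeAt t p with
  | some (node _ v _) => some v
  | _ => none

/-- The sum of all weights in the tree. -/
def totalWeight : BTree ℝ → ℝ
  | leaf => 0
  | node l v r => totalWeight l + v + totalWeight r

/-- `p̄(x)`: the aggregated weight of the subtree rooted at the node addressed
by `p`, with value `0` for an absent node. -/
def subWeight (t : BTree ℝ) (p : List Bool) : ℝ :=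
  match subtreeAt t p with
  | some s => totalWeight s
  | none => 0

/-- The weight of the node addressed by `p`, with default `0` for an absent node. -/
def weightD (t : BTree ℝ) (p : List Bool) : ℝ :=
  (weightAt t p).getD 0

/-- The depth of a node addressed by the path `p` (the root has depth 1). -/
def depth (p : List Bool) : ℕ := p.length + 1

/-- `c(T) = Σ_{x ∈ T} d(x) p(x)`, where the root has depth 1. -/
def cost : BTree ℝ → ℝ
  | leaf => 0
  | node l v r => (totalWeight l + v + totalWeight r) + cost l + cost r

/-- A tree is weighted if its weights are nonnegative and sum to 1. -/
def Weighted (t : BTree ℝ) : Prop :=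
  totalWeight t = 1 ∧ ∀ p w, weightAt t p = some w → (0 : ℝ) ≤ w

/-- Right rotation at the node addressed by `q`: replaces the subtree
`a(b(c,d),e)` rooted there by `b(c,a(d,e))`; `none` if the node addressed by
`q` does not exist or has no left child. -/
def rotateRightAt {α : Type} : BTree α → List Bool → Option (BTree α)
  | node (node c pb d) pa e, [] => some (node c pb (node d pa e))
  | node l v r, false :: p => (rotateRightAt l p).map (fun l' => node l' v r)
  | node l v r, true :: p => (rotateRightAt r p).map (fun r' => node l v r')
  | _, _ => none

/-- Left rotation at the node addressed by `q`: replaces the subtree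
`b(c,a(d,e))` rooted there by `a(b(c,d),e)`; `none` if the node addressed by
`q` does not exist or has no right child. -/
def rotateLeftAt {α : Type} : BTree α → List Bool → Option (BTree α)
  | node c pb (node d pa e), [] => some (node (node c pb d) pa e)
  | node l v r, false :: p => (rotateLeftAt l p).map (fun l' => node l' v r)
  | node l v r, true :: p => (rotateLeftAt r p).map (fun r' => node l v r')
  | _, _ => none

/-- `T^x`: bumping the (non-root) node `x` addressed by `p`, i.e. right
rotation at `π(x)` if `x` is a left child and left rotation at `π(x)` if `x`
is a right child.  Returns `none` iff `p` does not address a non-root node. -/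
def bump {α : Type} (t : BTree α) : List Bool → Option (BTree α)
  | [] => none
  | p => if p.getLastD false then rotateLeftAt t p.dropLast
         else rotateRightAt t p.dropLast

/-- The merit `μ(x,T) = p(x) + p̄(λ(x)) − p(π(x)) − p̄(σ(x))` of bumping the
node `x` addressed by `q ++ [dir]` whose parent `π(x)` is addressed by `q`;
`λ(x)` is the like-minded child of `x` and `σ(x)` the sibling of `x`. -/
def merit (t : BTree ℝ) (q : List Bool) (dir : Bool) : ℝ :=
  weightD t (q ++ [dir]) + subWeight t (q ++ [dir, dir])
    - weightD t q - subWeight t (q ++ [!dir])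

/-- The merit of bumping the node addressed by the (nonempty) path `p`. -/
def meritAt (t : BTree ℝ) (p : List Bool) : ℝ :=
  merit t p.dropLast (p.getLastD false)

open Classical in
/-- `β(T)`, the result of bumping `T`: `{T}` if no non-root node has positive
merit, and otherwise the set of all `T^x` for `x` a non-root node of maximal
merit. -/
noncomputable def beta (t : BTree ℝ) : Set (BTree ℝ) :=
  if ∃ p, p ≠ [] ∧ (weightAt t p).isSome ∧ 0 < meritAt t p then
    {t' | ∃ p, p ≠ [] ∧ (weightAt t p).isSome ∧
      (∀ q, q ≠ [] → (weightAt t q).isSome → meritAt t q ≤ meritAt t p) ∧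
      bump t p = some t'}
  else {t}

/-- `β^k(T)`: iterated bumping, `β^0(T) = {T}` and
`β^k(T) = ⋃_{t ∈ β^{k−1}(T)} β(t)`. -/
noncomputable def betaIter (t : BTree ℝ) : ℕ → Set (BTree ℝ)
  | 0 => {t}
  | k + 1 => ⋃ s ∈ betaIter t k, beta s

/-- The number of nodes of a binary tree. -/
def size {α : Type} : BTree α → ℕ
  | leaf => 0
  | node l _ r => size l + 1 + size r

/-- The in-order traversal of a binary tree. -/
def inorder {α : Type} : BTree α → List α
  | leaf => []
  | node l v r => inorder l ++ v :: inorder r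

end BTree


namespace BTree

lemma totalWeight_rotR : ∀ (T : BTree ℝ) (q : List Bool) (T' : BTree ℝ),
    rotateRightAt T q = some T' → totalWeight T' = totalWeight T := by
  intro T
  induction T with
  | leaf => intro q T' h; cases q <;> simp [rotateRightAt] at h
  | node l v r ihl ihr =>
    intro q T' h
    match q with
    | [] =>
      match l with
      | leaf => simp [rotateRightAt] at h
      | node c pb d =>
        simp [rotateRightAt] at h
        subst h; simp [totalWeight]; ring
    | false :: p =>
      simp [rotateRightAt, Option.map_eq_some_iff] at h
      obtain ⟨l', hl', rfl⟩ := h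
      simp [totalWeight, ihl p l' hl']
    | true :: p =>
      simp [rotateRightAt, Option.map_eq_some_iff] at h
      obtain ⟨r', hr', rfl⟩ := h
      simp [totalWeight, ihr p r' hr']

lemma totalWeight_rotL : ∀ (T : BTree ℝ) (q : List Bool) (T' : BTree ℝ),
    rotateLeftAt T q = some T' → totalWeight T' = totalWeight T := by
  intro T
  induction T with
  | leaf => intro q T' h; cases q <;> simp [rotateLeftAt] at h
  | node l v r ihl ihr =>
    intro q T' h
    match q with
    | [] =>
      match r with
      | leaf => simp [rotateLeftAt] at h
      | node c pb d =>
        simp [rotateLeftAt] at h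
        subst h; simp [totalWeight]; ring
    | false :: p =>
      simp [rotateLeftAt, Option.map_eq_some_iff] at h
      obtain ⟨l', hl', rfl⟩ := h
      simp [totalWeight, ihl p l' hl']
    | true :: p =>
      simp [rotateLeftAt, Option.map_eq_some_iff] at h
      obtain ⟨r', hr', rfl⟩ := h
      simp [totalWeight, ihr p r' hr']

lemma merit_cons (l : BTree ℝ) (v : ℝ) (r : BTree ℝ) (b : Bool) (q : List Bool) (dir : Bool) :
    merit (node l v r) (b :: q) dir = merit (if b then r else l) q dir := by
  cases b <;> rfl

lemma cost_rotR : ∀ (T : BTree ℝ) (q : List Bool) (T' : BTree ℝ),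
    rotateRightAt T q = some T' → cost T - cost T' = merit T q false := by
  intro T
  induction T with
  | leaf => intro q T' h; cases q <;> simp [rotateRightAt] at h
  | node l v r ihl ihr =>
    intro q T' h
    match q with
    | [] =>
      match l with
      | leaf => simp [rotateRightAt] at h
      | node c pb d =>
        simp [rotateRightAt] at h
        subst h
        simp [cost, merit, weightD, subWeight, weightAt, subtreeAt, totalWeight]
        ring
    | false :: p =>
      simp [rotateRightAt, Option.map_eq_some_iff] at h
      obtain ⟨l', hl', rfl⟩ := h
      have := ihl p l' hl'
      have hw := totalWeight_rotR l p l' hl'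
      simp [cost, merit_cons, hw]
      linarith
    | true :: p =>
      simp [rotateRightAt, Option.map_eq_some_iff] at h
      obtain ⟨r', hr', rfl⟩ := h
      have := ihr p r' hr'
      have hw := totalWeight_rotR r p r' hr'
      simp [cost, merit_cons, hw]
      linarith

lemma cost_rotL : ∀ (T : BTree ℝ) (q : List Bool) (T' : BTree ℝ),
    rotateLeftAt T q = some T' → cost T - cost T' = merit T q true := by
  intro T
  induction T with
  | leaf => intro q T' h; cases q <;> simp [rotateLeftAt] at h
  | node l v r ihl ihr =>
    intro q T' h
    match q with
    | [] =>
      match r with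
      | leaf => simp [rotateLeftAt] at h
      | node c pb d =>
        simp [rotateLeftAt] at h
        subst h
        simp [cost, merit, weightD, subWeight, weightAt, subtreeAt, totalWeight]
        ring
    | false :: p =>
      simp [rotateLeftAt, Option.map_eq_some_iff] at h
      obtain ⟨l', hl', rfl⟩ := h
      have := ihl p l' hl'
      have hw := totalWeight_rotL l p l' hl'
      simp [cost, merit_cons, hw]
      linarith
    | true :: p =>
      simp [rotateLeftAt, Option.map_eq_some_iff] at h
      obtain ⟨r', hr', rfl⟩ := h
      have := ihr p r' hr'
      have hw := totalWeight_rotL r p r' hr'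
      simp [cost, merit_cons, hw]
      linarith

end BTree

open BTree in
/-- Let `T` be a weighted binary tree and `x` the non-root
node of `T` addressed by the path `q ++ [dir]`.  Then `c(T^x) < c(T)` iff
`μ(x,T) > 0`, and `c(T^x) = c(T)` iff `μ(x,T) = 0`. -/
theorem cost_bump_lt_iff_merit_pos (T T' : BTree ℝ) (hT : T.Weighted)
    (q : List Bool) (dir : Bool) (hbump : T.bump (q ++ [dir]) = some T') :
    (cost T' < cost T ↔ 0 < merit T q dir) ∧
    (cost T' = cost T ↔ merit T q dir = 0) := by
  have key : cost T - cost T' = merit T q dir := by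
    have hne : q ++ [dir] ≠ [] := by simp
    rw [bump] at hbump
    case x_1 => simp
    rw [List.getLastD_eq_getLast?, List.getLast?_concat, List.dropLast_concat] at hbump
    cases dir with
    | false => simp at hbump; exact cost_rotR T q T' hbump
    | true => simp at hbump; exact cost_rotL T q T' hbump
  constructor <;> constructor <;> intro h <;> linarith
end

section
/- Let T be a weighted binary tree and let T' be any element of β(T). Then c(T) ≥ c(T'), with equality if and only if β(T) = {T}. -/
open BTree

lemma rotR_tw (t t' : BTree ℝ) (q : List Bool) (h : rotateRightAt t q = some t') :
    totalWeight t' = totalWeight t := by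
  induction t generalizing q t' with
  | leaf => cases q <;> simp [rotateRightAt] at h
  | node l v r ihl ihr =>
    match q with
    | [] =>
      match l, h with
      | BTree.leaf, h => simp [rotateRightAt] at h
      | BTree.node c pb d, h =>
        simp only [rotateRightAt, Option.some.injEq] at h
        subst h; simp [totalWeight]; ring
    | false :: p =>
      simp only [rotateRightAt, Option.map_eq_some_iff] at h
      obtain ⟨l', hl, rfl⟩ := h
      simp [totalWeight, ihl _ _ hl]
    | true :: p =>
      simp only [rotateRightAt, Option.map_eq_some_iff] at h
      obtain ⟨r', hr, rfl⟩ := h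
      simp [totalWeight, ihr _ _ hr]

lemma rotL_tw (t t' : BTree ℝ) (q : List Bool) (h : rotateLeftAt t q = some t') :
    totalWeight t' = totalWeight t := by
  induction t generalizing q t' with
  | leaf => cases q <;> simp [rotateLeftAt] at h
  | node l v r ihl ihr =>
    match q with
    | [] =>
      match r, h with
      | BTree.leaf, h => simp [rotateLeftAt] at h
      | BTree.node d pa e, h =>
        simp only [rotateLeftAt, Option.some.injEq] at h
        subst h; simp [totalWeight]; ring
    | false :: p =>
      simp only [rotateLeftAt, Option.map_eq_some_iff] at h
      obtain ⟨l', hl, rfl⟩ := h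
      simp [totalWeight, ihl _ _ hl]
    | true :: p =>
      simp only [rotateLeftAt, Option.map_eq_some_iff] at h
      obtain ⟨r', hr, rfl⟩ := h
      simp [totalWeight, ihr _ _ hr]

lemma rotR_cost (t t' : BTree ℝ) (q : List Bool) (h : rotateRightAt t q = some t') :
    cost t' = cost t - merit t q false := by
  induction t generalizing q t' with
  | leaf => cases q <;> simp [rotateRightAt] at h
  | node l v r ihl ihr =>
    match q with
    | [] =>
      match l, h with
      | BTree.leaf, h => simp [rotateRightAt] at h
      | BTree.node c pb d, h =>
        simp only [rotateRightAt, Option.some.injEq] at h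
        subst h
        simp [cost, totalWeight, merit, weightD, weightAt, subtreeAt, subWeight]
        ring
    | false :: p =>
      simp only [rotateRightAt, Option.map_eq_some_iff] at h
      obtain ⟨l', hl, rfl⟩ := h
      have := ihl _ _ hl
      simp only [cost, rotR_tw _ _ _ hl, this,
        merit, weightD, weightAt, subtreeAt, subWeight, List.cons_append, List.append_eq]
      ring
    | true :: p =>
      simp only [rotateRightAt, Option.map_eq_some_iff] at h
      obtain ⟨r', hr, rfl⟩ := h
      have := ihr _ _ hr
      simp only [cost, rotR_tw _ _ _ hr, this,
        merit, weightD, weightAt, subtreeAt, subWeight, List.cons_append, List.append_eq]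
      ring

lemma rotL_cost (t t' : BTree ℝ) (q : List Bool) (h : rotateLeftAt t q = some t') :
    cost t' = cost t - merit t q true := by
  induction t generalizing q t' with
  | leaf => cases q <;> simp [rotateLeftAt] at h
  | node l v r ihl ihr =>
    match q with
    | [] =>
      match r, h with
      | BTree.leaf, h => simp [rotateLeftAt] at h
      | BTree.node d pa e, h =>
        simp only [rotateLeftAt, Option.some.injEq] at h
        subst h
        simp [cost, totalWeight, merit, weightD, weightAt, subtreeAt, subWeight]
        ring
    | false :: p =>
      simp only [rotateLeftAt, Option.map_eq_some_iff] at h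
      obtain ⟨l', hl, rfl⟩ := h
      have := ihl _ _ hl
      simp only [cost, rotL_tw _ _ _ hl, this,
        merit, weightD, weightAt, subtreeAt, subWeight, List.cons_append, List.append_eq]
      ring
    | true :: p =>
      simp only [rotateLeftAt, Option.map_eq_some_iff] at h
      obtain ⟨r', hr, rfl⟩ := h
      have := ihr _ _ hr
      simp only [cost, rotL_tw _ _ _ hr, this,
        merit, weightD, weightAt, subtreeAt, subWeight, List.cons_append, List.append_eq]
      ring

lemma cost_bump (t t' : BTree ℝ) (p : List Bool) (hp : p ≠ [])
    (h : bump t p = some t') : cost t' = cost t - meritAt t p := by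
  obtain ⟨a, p', rfl⟩ : ∃ a p', p = a :: p' := by
    cases p with
    | nil => exact absurd rfl hp
    | cons a p' => exact ⟨a, p', rfl⟩
  have hb : bump t (a :: p') =
      (if (a :: p').getLastD false then rotateLeftAt t (a :: p').dropLast
       else rotateRightAt t (a :: p').dropLast) := rfl
  rw [hb] at h
  unfold meritAt
  by_cases hd : (a :: p').getLastD false
  · rw [if_pos hd] at h
    rw [hd]
    exact rotL_cost _ _ _ h
  · rw [if_neg hd] at h
    rw [Bool.not_eq_true] at hd
    rw [hd]
    exact rotR_cost _ _ _ h


open BTree in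
/-- Let `T` be a weighted binary tree and let `T'` be any
element of `β(T)`.  Then `c(T) ≥ c(T')`, with equality if and only if
`β(T) = {T}`. -/
theorem cost_le_of_mem_beta (T : BTree ℝ) (hT : T.Weighted)
    (T' : BTree ℝ) (hT' : T' ∈ beta T) :
    cost T' ≤ cost T ∧ (cost T' = cost T ↔ beta T = {T}) := by
  by_cases hpos : ∃ p, p ≠ [] ∧ (weightAt T p).isSome ∧ 0 < meritAt T p
  · have hbeta : beta T = {t' | ∃ p, p ≠ [] ∧ (weightAt T p).isSome ∧
        (∀ q, q ≠ [] → (weightAt T q).isSome → meritAt T q ≤ meritAt T p) ∧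
        bump T p = some t'} := by
      unfold beta; rw [if_pos hpos]
    rw [hbeta] at hT'
    have hmem := hT'
    obtain ⟨p, hpne, hps, hmax, hbump⟩ := hT'
    obtain ⟨p₀, hp₀ne, hp₀s, hp₀pos⟩ := hpos
    have hm : 0 < meritAt T p := lt_of_lt_of_le hp₀pos (hmax p₀ hp₀ne hp₀s)
    have hc : cost T' = cost T - meritAt T p := cost_bump _ _ _ hpne hbump
    have hlt : cost T' < cost T := by rw [hc]; linarith
    refine ⟨le_of_lt hlt, ?_, ?_⟩
    · intro he; exact absurd he (ne_of_lt hlt)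
    · intro he
      rw [← hbeta, he] at hmem
      exfalso
      have : T' = T := hmem
      rw [this] at hlt
      exact lt_irrefl _ hlt
  · have hbeta : beta T = {T} := by unfold beta; rw [if_neg hpos]
    rw [hbeta] at hT'
    have : T' = T := hT'
    subst this
    exact ⟨le_refl _, by simp [hbeta]⟩
end

section
/- Let T be a weighted binary tree such that μ(x,T) > 0 for some non-root node x. Then every element T' of β(T) satisfies c(T') = c(T) − M, where M is the maximum of μ(x,T) over all non-root nodes x of T. -/
namespace BTree

theorem rotR_spec (t : BTree ℝ) : ∀ q t', rotateRightAt t q = some t' →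
    totalWeight t' = totalWeight t ∧ cost t' = cost t - merit t q false := by
  induction t with
  | leaf => intro q t' h; cases q <;> simp [rotateRightAt] at h
  | node l v r ihl ihr =>
    intro q t' h
    match q with
    | [] =>
      match l, h with
      | leaf, h => simp [rotateRightAt] at h
      | node c pb d, h =>
        simp [rotateRightAt] at h
        subst h
        constructor
        · simp [totalWeight]; ring
        · simp [cost, merit, weightD, weightAt, subWeight, subtreeAt, totalWeight]; ring
    | false :: q =>
      simp only [rotateRightAt, Option.map_eq_some_iff] at h
      obtain ⟨l', hl, rfl⟩ := h
      obtain ⟨h1, h2⟩ := ihl q l' hl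
      have hm : merit (node l v r) (false :: q) false = merit l q false := rfl
      constructor
      · simp [totalWeight, h1]
      · rw [hm]; simp [cost, h1, h2]; ring
    | true :: q =>
      simp only [rotateRightAt, Option.map_eq_some_iff] at h
      obtain ⟨r', hr, rfl⟩ := h
      obtain ⟨h1, h2⟩ := ihr q r' hr
      have hm : merit (node l v r) (true :: q) false = merit r q false := rfl
      constructor
      · simp [totalWeight, h1]
      · rw [hm]; simp [cost, h1, h2]; ring

theorem rotL_spec (t : BTree ℝ) : ∀ q t', rotateLeftAt t q = some t' →
    totalWeight t' = totalWeight t ∧ cost t' = cost t - merit t q true := by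
  induction t with
  | leaf => intro q t' h; cases q <;> simp [rotateLeftAt] at h
  | node l v r ihl ihr =>
    intro q t' h
    match q with
    | [] =>
      match r, h with
      | leaf, h => simp [rotateLeftAt] at h
      | node d pa e, h =>
        simp [rotateLeftAt] at h
        subst h
        constructor
        · simp [totalWeight]; ring
        · simp [cost, merit, weightD, weightAt, subWeight, subtreeAt, totalWeight]; ring
    | false :: q =>
      simp only [rotateLeftAt, Option.map_eq_some_iff] at h
      obtain ⟨l', hl, rfl⟩ := h
      obtain ⟨h1, h2⟩ := ihl q l' hl
      have hm : merit (node l v r) (false :: q) true = merit l q true := rfl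
      constructor
      · simp [totalWeight, h1]
      · rw [hm]; simp [cost, h1, h2]; ring
    | true :: q =>
      simp only [rotateLeftAt, Option.map_eq_some_iff] at h
      obtain ⟨r', hr, rfl⟩ := h
      obtain ⟨h1, h2⟩ := ihr q r' hr
      have hm : merit (node l v r) (true :: q) true = merit r q true := rfl
      constructor
      · simp [totalWeight, h1]
      · rw [hm]; simp [cost, h1, h2]; ring

theorem bump_cost (t : BTree ℝ) (p : List Bool) (hp : p ≠ []) (t' : BTree ℝ)
    (h : bump t p = some t') : cost t' = cost t - meritAt t p := by
  obtain ⟨a, as, rfl⟩ := List.exists_cons_of_ne_nil hp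
  have heq : bump t (a :: as) = if (a :: as).getLastD false then rotateLeftAt t (a :: as).dropLast
      else rotateRightAt t (a :: as).dropLast := rfl
  rw [heq] at h
  rcases hdir : (a :: as).getLastD false with _ | _
  · rw [hdir] at h; rw [if_neg Bool.false_ne_true] at h
    have := (rotR_spec t _ _ h).2
    rwa [meritAt, hdir]
  · rw [hdir] at h; rw [if_pos rfl] at h
    have := (rotL_spec t _ _ h).2
    rwa [meritAt, hdir]

end BTree

open BTree in
/-- Let `T` be a weighted binary tree with `μ(x,T) > 0` for
some non-root node `x`, and let `M` be the maximum of `μ(x,T)` over all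
non-root nodes `x` of `T`.  Then every `T' ∈ β(T)` satisfies
`c(T') = c(T) − M`. -/
theorem cost_of_mem_beta (T : BTree ℝ) (hT : T.Weighted)
    (hpos : ∃ p, p ≠ [] ∧ (T.weightAt p).isSome ∧ 0 < meritAt T p)
    (M : ℝ)
    (hM : IsGreatest {m : ℝ | ∃ p, p ≠ [] ∧ (T.weightAt p).isSome ∧ meritAt T p = m} M) :
    ∀ T' ∈ beta T, cost T' = cost T - M := by
  intro T' hT'
  rw [beta, if_pos hpos] at hT'
  obtain ⟨p, hp, hsome, hmax, hbump⟩ := hT'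
  have h1 : meritAt T p ≤ M := hM.2 ⟨p, hp, hsome, rfl⟩
  obtain ⟨q, hq1, hq2, hq3⟩ := hM.1
  have h2 : M ≤ meritAt T p := hq3 ▸ hmax q hq1 hq2
  rw [bump_cost T p hp T' hbump, le_antisymm h1 h2]
end

section
/- Let T be a weighted binary tree with n nodes and let N be the number of binary trees on n nodes (the n-th Catalan number). Then for every k ≥ N, β^{k+1}(T) = β^k(T); in particular there exists a finite k such that β^{k+1}(T) = β^k(T). -/
namespace BTree

/-!
A bump with positive merit preserves the in-order traversal and lowers the cost by that merit.
A tree is determined by its shape and its in-order traversal, so at most `catalan n` trees share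
the in-order traversal of `T`. A tree of `β^k(T)` that is not a fixed point of `β` was reached
through `k` strict cost decreases, so more than `k` of these trees cost at least as much as it;
hence for `k ≥ catalan n` every tree of `β^k(T)` is a fixed point.
-/

theorem subtreeAt_node_cons {α : Type} (l r : BTree α) (v : α) (b : Bool) (p : List Bool) :
    subtreeAt (node l v r) (b :: p) = subtreeAt (cond b r l) p := by
  cases b <;> rfl

theorem merit_node_cons (l r : BTree ℝ) (v : ℝ) (b : Bool) (q : List Bool) (dir : Bool) :
    merit (node l v r) (b :: q) dir = merit (cond b r l) q dir := by
  simp only [merit, weightD, weightAt, subWeight, List.cons_append, subtreeAt_node_cons]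

theorem totalWeight_eq_sum_inorder (t : BTree ℝ) : totalWeight t = (inorder t).sum := by
  induction t with
  | leaf => rfl
  | node l v r ihl ihr => simp [totalWeight, inorder, ihl, ihr, add_assoc]

theorem length_inorder {α : Type} (t : BTree α) : (inorder t).length = size t := by
  induction t with
  | leaf => rfl
  | node l v r ihl ihr => simp [inorder, size, ihl, ihr]; omega

theorem inorder_rotateRightAt {α : Type} {t t' : BTree α} {q : List Bool}
    (h : rotateRightAt t q = some t') : inorder t' = inorder t := by
  induction t generalizing q t' with
  | leaf => cases q <;> simp [rotateRightAt] at h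
  | node l v r ihl ihr =>
    match q with
    | [] =>
      rcases l with _ | ⟨c, pb, d⟩
      · simp [rotateRightAt] at h
      · cases h; simp [inorder]
    | false :: q =>
      rw [rotateRightAt, Option.map_eq_some_iff] at h
      obtain ⟨l', hl', rfl⟩ := h
      simp [inorder, ihl hl']
    | true :: q =>
      rw [rotateRightAt, Option.map_eq_some_iff] at h
      obtain ⟨r', hr', rfl⟩ := h
      simp [inorder, ihr hr']

theorem inorder_rotateLeftAt {α : Type} {t t' : BTree α} {q : List Bool}
    (h : rotateLeftAt t q = some t') : inorder t' = inorder t := by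
  induction t generalizing q t' with
  | leaf => cases q <;> simp [rotateLeftAt] at h
  | node l v r ihl ihr =>
    match q with
    | [] =>
      rcases r with _ | ⟨d, pa, e⟩
      · simp [rotateLeftAt] at h
      · cases h; simp [inorder]
    | false :: q =>
      rw [rotateLeftAt, Option.map_eq_some_iff] at h
      obtain ⟨l', hl', rfl⟩ := h
      simp [inorder, ihl hl']
    | true :: q =>
      rw [rotateLeftAt, Option.map_eq_some_iff] at h
      obtain ⟨r', hr', rfl⟩ := h
      simp [inorder, ihr hr']

theorem cost_rotateRightAt {t t' : BTree ℝ} {q : List Bool}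
    (h : rotateRightAt t q = some t') : cost t' = cost t - merit t q false := by
  induction t generalizing q t' with
  | leaf => cases q <;> simp [rotateRightAt] at h
  | node l v r ihl ihr =>
    match q with
    | [] =>
      rcases l with _ | ⟨c, pb, d⟩
      · simp [rotateRightAt] at h
      · cases h
        simp only [cost, totalWeight, merit, weightD, weightAt, List.nil_append, subtreeAt,
          Option.getD_some, subWeight, Bool.not_false]
        ring
    | false :: q =>
      rw [rotateRightAt, Option.map_eq_some_iff] at h
      obtain ⟨l', hl', rfl⟩ := h
      simp only [cost, merit_node_cons, cond, ihl hl', totalWeight_eq_sum_inorder,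
        inorder_rotateRightAt hl']
      ring
    | true :: q =>
      rw [rotateRightAt, Option.map_eq_some_iff] at h
      obtain ⟨r', hr', rfl⟩ := h
      simp only [cost, merit_node_cons, cond, ihr hr', totalWeight_eq_sum_inorder,
        inorder_rotateRightAt hr']
      ring

theorem cost_rotateLeftAt {t t' : BTree ℝ} {q : List Bool}
    (h : rotateLeftAt t q = some t') : cost t' = cost t - merit t q true := by
  induction t generalizing q t' with
  | leaf => cases q <;> simp [rotateLeftAt] at h
  | node l v r ihl ihr =>
    match q with
    | [] =>
      rcases r with _ | ⟨d, pa, e⟩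
      · simp [rotateLeftAt] at h
      · cases h
        simp only [cost, totalWeight, merit, weightD, weightAt, List.nil_append, subtreeAt,
          Option.getD_some, subWeight, Bool.not_true]
        ring
    | false :: q =>
      rw [rotateLeftAt, Option.map_eq_some_iff] at h
      obtain ⟨l', hl', rfl⟩ := h
      simp only [cost, merit_node_cons, cond, ihl hl', totalWeight_eq_sum_inorder,
        inorder_rotateLeftAt hl']
      ring
    | true :: q =>
      rw [rotateLeftAt, Option.map_eq_some_iff] at h
      obtain ⟨r', hr', rfl⟩ := h
      simp only [cost, merit_node_cons, cond, ihr hr', totalWeight_eq_sum_inorder,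
        inorder_rotateLeftAt hr']
      ring

theorem inorder_bump {α : Type} {t t' : BTree α} {p : List Bool} (h : bump t p = some t') :
    inorder t' = inorder t := by
  cases p with
  | nil => simp [bump] at h
  | cons a p =>
    simp only [bump] at h
    split_ifs at h
    · exact inorder_rotateLeftAt h
    · exact inorder_rotateRightAt h

theorem cost_bump {t t' : BTree ℝ} {p : List Bool} (h : bump t p = some t') :
    cost t' = cost t - meritAt t p := by
  cases p with
  | nil => simp [bump] at h
  | cons a p =>
    simp only [bump] at h
    split_ifs at h with hdir
    · rw [cost_rotateLeftAt h, meritAt, hdir]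
    · rw [cost_rotateRightAt h, meritAt, Bool.eq_false_iff.mpr hdir]

def shape {α : Type} : BTree α → BinaryTree Unit
  | leaf => .nil
  | node l _ r => .node () (shape l) (shape r)

theorem numNodes_shape {α : Type} (t : BTree α) : (shape t).numNodes = size t := by
  induction t with
  | leaf => rfl
  | node l v r ihl ihr => simp [shape, size, BinaryTree.numNodes, ihl, ihr]; omega

theorem eq_of_shape_eq_of_inorder_eq {α : Type} :
    ∀ {t t' : BTree α}, shape t = shape t' → inorder t = inorder t' → t = t'
  | leaf, leaf, _, _ => rfl
  | leaf, node _ _ _, h, _ | node _ _ _, leaf, h, _ => by simp [shape] at h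
  | node l v r, node l' v' r', h, hi => by
    simp only [shape, BinaryTree.node.injEq, true_and] at h
    have hlen : (inorder l).length = (inorder l').length := by
      rw [length_inorder, length_inorder, ← numNodes_shape, ← numNodes_shape, h.1]
    obtain ⟨hl, hvr⟩ := List.append_inj hi hlen
    obtain ⟨rfl, hr⟩ := List.cons_eq_cons.mp hvr
    rw [eq_of_shape_eq_of_inorder_eq h.1 hl, eq_of_shape_eq_of_inorder_eq h.2 hr]

theorem mapsTo_shape_treesOfNumNodesEq {α : Type} (xs : List α) :
    Set.MapsTo shape {t | inorder t = xs} (BinaryTree.treesOfNumNodesEq xs.length) :=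
  fun t (ht : inorder t = xs) => by
    rw [Finset.mem_coe, BinaryTree.mem_treesOfNumNodesEq, numNodes_shape, ← length_inorder, ht]

theorem injOn_shape_setOf_inorder_eq {α : Type} (xs : List α) :
    Set.InjOn shape {t | inorder t = xs} :=
  fun _ ht _ ht' h => eq_of_shape_eq_of_inorder_eq h (ht.trans ht'.symm)

theorem finite_setOf_inorder_eq {α : Type} (xs : List α) : {t : BTree α | inorder t = xs}.Finite :=
  .of_injOn (mapsTo_shape_treesOfNumNodesEq xs) (injOn_shape_setOf_inorder_eq xs)
    (Finset.finite_toSet _)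

theorem ncard_setOf_inorder_eq_le_catalan {α : Type} (xs : List α) :
    {t : BTree α | inorder t = xs}.ncard ≤ catalan xs.length := by
  have := Set.ncard_le_ncard_of_injOn shape (mapsTo_shape_treesOfNumNodesEq xs)
    (injOn_shape_setOf_inorder_eq xs)
  rwa [Set.ncard_coe_finset, BinaryTree.treesOfNumNodesEq_card_eq_catalan] at this

def costlier (t : BTree ℝ) : Set (BTree ℝ) :=
  {s | inorder s = inorder t ∧ cost t ≤ cost s}

theorem finite_costlier (t : BTree ℝ) : (costlier t).Finite :=
  (finite_setOf_inorder_eq _).subset fun _ hs => hs.1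

theorem ncard_costlier_le_catalan (t : BTree ℝ) : (costlier t).ncard ≤ catalan t.size := by
  rw [← length_inorder]
  exact (Set.ncard_le_ncard (fun _ hs => hs.1) (finite_setOf_inorder_eq _)).trans
    (ncard_setOf_inorder_eq_le_catalan _)

theorem ncard_costlier_lt_of_cost_lt {t t' : BTree ℝ} (hi : inorder t' = inorder t)
    (hc : cost t' < cost t) : (costlier t).ncard < (costlier t').ncard := by
  have hsub : costlier t ⊆ costlier t' := fun s hs => ⟨hs.1.trans hi.symm, hc.le.trans hs.2⟩
  refine Set.ncard_lt_ncard ((Set.ssubset_iff_of_subset hsub).mpr ⟨t', ⟨rfl, le_rfl⟩, ?_⟩)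
    (finite_costlier t')
  exact fun ht' => hc.not_ge ht'.2

theorem inorder_of_mem_beta {t t' : BTree ℝ} (h : t' ∈ beta t) : inorder t' = inorder t := by
  unfold beta at h
  split_ifs at h
  · obtain ⟨p, -, -, -, hp⟩ := h
    exact inorder_bump hp
  · rw [Set.mem_singleton_iff.mp h]

theorem cost_lt_of_mem_beta {t t' : BTree ℝ} (hne : beta t ≠ {t}) (h : t' ∈ beta t) :
    cost t' < cost t := by
  unfold beta at hne h
  split_ifs at hne h with hpos
  · obtain ⟨p₀, hp₀, hw₀, hm₀⟩ := hpos
    obtain ⟨p, -, -, hmax, hp⟩ := h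
    rw [cost_bump hp]
    linarith [hmax p₀ hp₀ hw₀]
  · exact absurd rfl hne

theorem inorder_of_mem_betaIter {T t : BTree ℝ} {k : ℕ} (ht : t ∈ betaIter T k) :
    inorder t = inorder T := by
  induction k generalizing t with
  | zero => rw [Set.mem_singleton_iff.mp ht]
  | succ k ih =>
    obtain ⟨s, hs, hts⟩ := Set.mem_iUnion₂.mp ht
    exact (inorder_of_mem_beta hts).trans (ih hs)

theorem beta_eq_singleton_or_lt_ncard_costlier {T t : BTree ℝ} {k : ℕ}
    (ht : t ∈ betaIter T k) : beta t = {t} ∨ k < (costlier t).ncard := by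
  induction k generalizing t with
  | zero =>
    rw [Set.mem_singleton_iff.mp ht]
    exact .inr ((Set.ncard_pos (finite_costlier T)).mpr ⟨T, rfl, le_rfl⟩)
  | succ k ih =>
    obtain ⟨s, hs, hts⟩ := Set.mem_iUnion₂.mp ht
    by_cases hfix : beta s = {s}
    · rw [hfix, Set.mem_singleton_iff] at hts
      exact .inl (hts ▸ hfix)
    · have hlt := ncard_costlier_lt_of_cost_lt (inorder_of_mem_beta hts)
        (cost_lt_of_mem_beta hfix hts)
      exact .inr (Nat.lt_of_le_of_lt ((ih hs).resolve_left hfix) hlt)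

theorem beta_eq_singleton_of_catalan_le {T t : BTree ℝ} {k : ℕ} (hk : catalan T.size ≤ k)
    (ht : t ∈ betaIter T k) : beta t = {t} := by
  refine (beta_eq_singleton_or_lt_ncard_costlier ht).resolve_right fun hlt => ?_
  have hsize : t.size = T.size := by
    rw [← length_inorder, ← length_inorder, inorder_of_mem_betaIter ht]
  have := ncard_costlier_le_catalan t
  rw [hsize] at this
  omega

theorem betaIter_succ_eq_of_forall_beta_eq_singleton {T : BTree ℝ} {k : ℕ}
    (h : ∀ t ∈ betaIter T k, beta t = {t}) : betaIter T (k + 1) = betaIter T k := by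
  rw [betaIter, Set.iUnion₂_congr h, Set.biUnion_of_singleton]

end BTree

open BTree in
theorem betaIter_stabilizes_general (T : BTree ℝ) :
    (∀ k, catalan T.size ≤ k → betaIter T (k + 1) = betaIter T k) ∧
    ∃ k, betaIter T (k + 1) = betaIter T k := by
  have hstable : ∀ k, catalan T.size ≤ k → betaIter T (k + 1) = betaIter T k := fun _ hk =>
    betaIter_succ_eq_of_forall_beta_eq_singleton fun _ ht => beta_eq_singleton_of_catalan_le hk ht
  exact ⟨hstable, _, hstable _ le_rfl⟩

open BTree in
/-- Let `T` be a weighted binary tree with `n` nodes and let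
`N = catalan n` be the number of binary trees on `n` nodes.  Then for every
`k ≥ N`, `β^{k+1}(T) = β^k(T)`; in particular there is a finite `k` with
`β^{k+1}(T) = β^k(T)`. -/
theorem betaIter_stabilizes (T : BTree ℝ) (hT : T.Weighted) :
    (∀ k, catalan T.size ≤ k → betaIter T (k + 1) = betaIter T k) ∧
    ∃ k, betaIter T (k + 1) = betaIter T k :=
  betaIter_stabilizes_general T
end

section
/- Let T be a weighted binary tree and x a non-root node of T with parent y = π(x). Then in the bumped tree T^x, the subtree weight p̄ changes for at most the two nodes x and y: p̄(x) in T^x equals p̄(y) in T, and for every node z of T other than x and y, the subtree weight p̄(z) is the same in T and in T^x. -/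
namespace BTree

lemma subWeight_nil' (t : BTree ℝ) : subWeight t [] = totalWeight t := by
  simp [subWeight, subtreeAt]

lemma subWeight_node_false (l : BTree ℝ) (v : ℝ) (r : BTree ℝ) (p : List Bool) :
    subWeight (node l v r) (false :: p) = subWeight l p := rfl

lemma subWeight_node_true (l : BTree ℝ) (v : ℝ) (r : BTree ℝ) (p : List Bool) :
    subWeight (node l v r) (true :: p) = subWeight r p := rfl

lemma subWeight_congr {t t' : BTree ℝ} {p p' : List Bool}
    (h : subtreeAt t p = subtreeAt t' p') : subWeight t p = subWeight t' p' := by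
  unfold subWeight; rw [h]

lemma totalWeight_rotateRightAt (q : List Bool) :
    ∀ (T T' : BTree ℝ), rotateRightAt T q = some T' → totalWeight T' = totalWeight T := by
  induction q with
  | nil =>
    rintro (_ | ⟨(_ | ⟨c, pb, d⟩), pa, e⟩) T' h <;> simp [rotateRightAt] at h
    subst h; simp [totalWeight]; ring
  | cons b q ih =>
    rintro (_ | ⟨l, v, r⟩) T' h
    · cases b <;> simp [rotateRightAt] at h
    · cases b <;> simp [rotateRightAt, Option.map_eq_some_iff] at h <;>
      · obtain ⟨s, hs, rfl⟩ := h
        simp [totalWeight, ih _ _ hs]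

lemma totalWeight_rotateLeftAt (q : List Bool) :
    ∀ (T T' : BTree ℝ), rotateLeftAt T q = some T' → totalWeight T' = totalWeight T := by
  induction q with
  | nil =>
    rintro (_ | ⟨c, pb, (_ | ⟨d, pa, e⟩)⟩) T' h <;> simp [rotateLeftAt] at h
    subst h; simp [totalWeight]; ring
  | cons b q ih =>
    rintro (_ | ⟨l, v, r⟩) T' h
    · cases b <;> simp [rotateLeftAt] at h
    · cases b <;> simp [rotateLeftAt, Option.map_eq_some_iff] at h <;>
      · obtain ⟨s, hs, rfl⟩ := h
        simp [totalWeight, ih _ _ hs]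

lemma rotR_key (q : List Bool) : ∀ (T T' : BTree ℝ), rotateRightAt T q = some T' →
    subWeight T' q = subWeight T q ∧
    (∀ s, subtreeAt T' (q ++ false :: s) = subtreeAt T (q ++ [false, false] ++ s)) ∧
    (∀ s, subtreeAt T' (q ++ [true, false] ++ s) = subtreeAt T (q ++ [false, true] ++ s)) ∧
    (∀ s, subtreeAt T' (q ++ [true, true] ++ s) = subtreeAt T (q ++ [true] ++ s)) ∧
    (∀ p, ¬ q <+: p → subWeight T' p = subWeight T p) := by
  induction q with
  | nil =>
    rintro (_ | ⟨(_ | ⟨c, pb, d⟩), pa, e⟩) T' h <;> simp [rotateRightAt] at h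
    subst h
    refine ⟨?_, ?_, ?_, ?_, ?_⟩
    · simp [subWeight, subtreeAt, totalWeight]; ring
    · intro s; simp [subtreeAt]
    · intro s; simp [subtreeAt]
    · intro s; simp [subtreeAt]
    · intro p hp; exact absurd List.nil_prefix hp
  | cons b q ih =>
    rintro (_ | ⟨l, v, r⟩) T' h
    · cases b <;> simp [rotateRightAt] at h
    cases b
    · simp only [rotateRightAt, Option.map_eq_some_iff] at h
      obtain ⟨l', hl, rfl⟩ := h
      obtain ⟨h1, h2, h3, h4, h5⟩ := ih l l' hl
      refine ⟨h1, fun s => h2 s, fun s => h3 s, fun s => h4 s, ?_⟩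
      intro p hp
      match p with
      | [] => simp [subWeight_nil', totalWeight, totalWeight_rotateRightAt q l l' hl]
      | true :: p' => rfl
      | false :: p' =>
        have hq : ¬ q <+: p' := fun hc => hp (List.cons_prefix_cons.mpr ⟨rfl, hc⟩)
        rw [subWeight_node_false, subWeight_node_false]
        exact h5 p' hq
    · simp only [rotateRightAt, Option.map_eq_some_iff] at h
      obtain ⟨r', hr, rfl⟩ := h
      obtain ⟨h1, h2, h3, h4, h5⟩ := ih r r' hr
      refine ⟨h1, fun s => h2 s, fun s => h3 s, fun s => h4 s, ?_⟩
      intro p hp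
      match p with
      | [] => simp [subWeight_nil', totalWeight, totalWeight_rotateRightAt q r r' hr]
      | false :: p' => rfl
      | true :: p' =>
        have hq : ¬ q <+: p' := fun hc => hp (List.cons_prefix_cons.mpr ⟨rfl, hc⟩)
        rw [subWeight_node_true, subWeight_node_true]
        exact h5 p' hq

lemma rotL_key (q : List Bool) : ∀ (T T' : BTree ℝ), rotateLeftAt T q = some T' →
    subWeight T' q = subWeight T q ∧
    (∀ s, subtreeAt T' (q ++ true :: s) = subtreeAt T (q ++ [true, true] ++ s)) ∧
    (∀ s, subtreeAt T' (q ++ [false, true] ++ s) = subtreeAt T (q ++ [true, false] ++ s)) ∧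
    (∀ s, subtreeAt T' (q ++ [false, false] ++ s) = subtreeAt T (q ++ [false] ++ s)) ∧
    (∀ p, ¬ q <+: p → subWeight T' p = subWeight T p) := by
  induction q with
  | nil =>
    rintro (_ | ⟨c, pb, (_ | ⟨d, pa, e⟩)⟩) T' h <;> simp [rotateLeftAt] at h
    subst h
    refine ⟨?_, ?_, ?_, ?_, ?_⟩
    · simp [subWeight, subtreeAt, totalWeight]; ring
    · intro s; simp [subtreeAt]
    · intro s; simp [subtreeAt]
    · intro s; simp [subtreeAt]
    · intro p hp; exact absurd List.nil_prefix hp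
  | cons b q ih =>
    rintro (_ | ⟨l, v, r⟩) T' h
    · cases b <;> simp [rotateLeftAt] at h
    cases b
    · simp only [rotateLeftAt, Option.map_eq_some_iff] at h
      obtain ⟨l', hl, rfl⟩ := h
      obtain ⟨h1, h2, h3, h4, h5⟩ := ih l l' hl
      refine ⟨h1, fun s => h2 s, fun s => h3 s, fun s => h4 s, ?_⟩
      intro p hp
      match p with
      | [] => simp [subWeight_nil', totalWeight, totalWeight_rotateLeftAt q l l' hl]
      | true :: p' => rfl
      | false :: p' =>
        have hq : ¬ q <+: p' := fun hc => hp (List.cons_prefix_cons.mpr ⟨rfl, hc⟩)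
        rw [subWeight_node_false, subWeight_node_false]
        exact h5 p' hq
    · simp only [rotateLeftAt, Option.map_eq_some_iff] at h
      obtain ⟨r', hr, rfl⟩ := h
      obtain ⟨h1, h2, h3, h4, h5⟩ := ih r r' hr
      refine ⟨h1, fun s => h2 s, fun s => h3 s, fun s => h4 s, ?_⟩
      intro p hp
      match p with
      | [] => simp [subWeight_nil', totalWeight, totalWeight_rotateLeftAt q r r' hr]
      | false :: p' => rfl
      | true :: p' =>
        have hq : ¬ q <+: p' := fun hc => hp (List.cons_prefix_cons.mpr ⟨rfl, hc⟩)
        rw [subWeight_node_true, subWeight_node_true]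
        exact h5 p' hq

end BTree

open BTree in
/-- Let `T` be a weighted binary tree and `x` the non-root
node addressed by `q ++ [dir]`, with parent `y = π(x)` addressed by `q`.  In
the bumped tree `T^x` (where `x` is now addressed by `q`, `y` by
`q ++ [!dir]`, and the three reattached subtrees by `q ++ [dir]`,
`q ++ [!dir, dir]` and `q ++ [!dir, !dir]`), the subtree weight `p̄` changes
for at most the two nodes `x` and `y`: `p̄(x)` in `T^x` equals `p̄(y)` in `T`,
and every node other than `x` and `y` has the same subtree weight in `T` and
in `T^x`. -/
theorem subWeight_bump (T T' : BTree ℝ) (hT : T.Weighted)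
    (q : List Bool) (dir : Bool) (hbump : T.bump (q ++ [dir]) = some T') :
    -- `p̄(x)` in `T^x` equals `p̄(y)` in `T`
    subWeight T' q = subWeight T q ∧
    -- nodes of the like-minded subtree `λ(x)` are unchanged
    (∀ s, subWeight T' (q ++ [dir] ++ s) = subWeight T (q ++ [dir, dir] ++ s)) ∧
    -- nodes of the middle subtree are unchanged
    (∀ s, subWeight T' (q ++ [!dir, dir] ++ s) = subWeight T (q ++ [dir, !dir] ++ s)) ∧
    -- nodes of the sibling subtree `σ(x)` are unchanged
    (∀ s, subWeight T' (q ++ [!dir, !dir] ++ s) = subWeight T (q ++ [!dir] ++ s)) ∧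
    -- nodes outside the subtree rooted at `y` are unchanged
    (∀ p, ¬ q <+: p → subWeight T' p = subWeight T p)  := by
  have hb : T.bump (q ++ [dir]) =
      if (q ++ [dir]).getLastD false then rotateLeftAt T (q ++ [dir]).dropLast
      else rotateRightAt T (q ++ [dir]).dropLast := by
    rcases q with _ | ⟨b, q⟩ <;> rfl
  rw [hb, List.getLastD_concat, List.dropLast_concat] at hbump
  cases dir
  · simp only [Bool.false_eq_true, if_false] at hbump
    obtain ⟨h1, h2, h3, h4, h5⟩ := rotR_key q T T' hbump
    refine ⟨h1, ?_, ?_, ?_, h5⟩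
    · intro s; exact subWeight_congr (by simpa [List.append_assoc] using h2 s)
    · intro s; exact subWeight_congr (by simpa [List.append_assoc] using h3 s)
    · intro s; exact subWeight_congr (by simpa [List.append_assoc] using h4 s)
  · simp only [if_true] at hbump
    obtain ⟨h1, h2, h3, h4, h5⟩ := rotL_key q T T' hbump
    refine ⟨h1, ?_, ?_, ?_, h5⟩
    · intro s; exact subWeight_congr (by simpa [List.append_assoc] using h2 s)
    · intro s; exact subWeight_congr (by simpa [List.append_assoc] using h3 s)
    · intro s; exact subWeight_congr (by simpa [List.append_assoc] using h4 s)
end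

section
/- Let T be a weighted binary tree and x a non-root node of T with parent y = π(x), and write c', d', e' for the roots (when present) of the three subtrees that are reattached by the rotation performed when bumping x (in the right-rotation case, c' and d' are the children of x and e' is the sibling of x). Then for every non-root node z of T other than the (at most five) nodes x, y, c', d', e', the merit is unchanged: μ(z, T^x) = μ(z, T). -/
/-! A rotation at `y` replaces the subtree rooted at `y` by one of the same total weight and
moves the subtrees `c, d, e` around intact. The merit of `z` only involves the weights of `z`
and `π(z)` and the aggregated weights of `λ(z)` and `σ(z)`. Outside the subtree of `y` the
only one of these that can see the rotation is the aggregated weight of `y`, which is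
preserved; inside `c`, `d` or `e` the merit is a function of the subtree rooted at `π(z)`,
which is carried along unchanged. -/

namespace BTree

section Subtrees

variable {α : Type}

def replaceAt : BTree α → List Bool → BTree α → BTree α
  | _, [], s => s
  | leaf, _ :: _, _ => leaf
  | node l v r, false :: p, s => node (replaceAt l p s) v r
  | node l v r, true :: p, s => node l v (replaceAt r p s)

theorem subtreeAt_append (t : BTree α) (u v : List Bool) :
    subtreeAt t (u ++ v) = (subtreeAt t u).bind (subtreeAt · v) := by
  induction u generalizing t with
  | nil => simp [subtreeAt]
  | cons a u ih =>
    cases t with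
    | leaf => simp [subtreeAt]
    | node l w r => cases a <;> simp [subtreeAt, ih]

theorem subtreeAt_replaceAt_append {t u u' : BTree α} {q : List Bool}
    (h : subtreeAt t q = some u) (v : List Bool) :
    subtreeAt (replaceAt t q u') (q ++ v) = subtreeAt u' v := by
  induction q generalizing t with
  | nil => simp [replaceAt]
  | cons a q ih =>
    cases t with
    | leaf => simp [subtreeAt] at h
    | node l w r => cases a <;> simp_all [subtreeAt, replaceAt]

theorem subtreeAt_replaceAt_append_eq {t u u' : BTree α} {q v w : List Bool}
    (h : subtreeAt t q = some u) (hvw : subtreeAt u' v = subtreeAt u w) :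
    subtreeAt (replaceAt t q u') (q ++ v) = subtreeAt t (q ++ w) := by
  rw [subtreeAt_replaceAt_append h, subtreeAt_append, h, hvw]
  rfl

theorem weightAt_replaceAt_of_not_prefix {t u u' : BTree α} {q r : List Bool}
    (h : subtreeAt t q = some u) (hr : ¬ q <+: r) :
    weightAt (replaceAt t q u') r = weightAt t r := by
  induction q generalizing t r with
  | nil => exact absurd List.nil_prefix hr
  | cons a q ih =>
    cases t with
    | leaf => simp [subtreeAt] at h
    | node l w rr =>
      cases r with
      | nil => cases a <;> rfl
      | cons b r =>
        cases a <;> cases b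
        · exact ih (t := l) h fun hq => hr (List.cons_prefix_cons.mpr ⟨rfl, hq⟩)
        · rfl
        · rfl
        · exact ih (t := rr) h fun hq => hr (List.cons_prefix_cons.mpr ⟨rfl, hq⟩)

theorem rotateRightAt_eq_some {t t' : BTree α} {q : List Bool}
    (h : rotateRightAt t q = some t') :
    ∃ c pb d pa e, subtreeAt t q = some (node (node c pb d) pa e) ∧
      t' = replaceAt t q (node c pb (node d pa e)) := by
  induction q generalizing t t' with
  | nil =>
    match t, h with
    | node (node c pb d) pa e, h =>
      cases h
      exact ⟨c, pb, d, pa, e, rfl, rfl⟩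
  | cons a q ih =>
    cases t with
    | leaf => simp [rotateRightAt] at h
    | node l v r =>
      cases a <;>
      · simp only [rotateRightAt, Option.map_eq_some_iff] at h
        obtain ⟨s', hs, rfl⟩ := h
        obtain ⟨c, pb, d, pa, e, h1, rfl⟩ := ih hs
        exact ⟨c, pb, d, pa, e, h1, rfl⟩

theorem rotateLeftAt_eq_some {t t' : BTree α} {q : List Bool}
    (h : rotateLeftAt t q = some t') :
    ∃ c pb d pa e, subtreeAt t q = some (node c pb (node d pa e)) ∧
      t' = replaceAt t q (node (node c pb d) pa e) := by
  induction q generalizing t t' with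
  | nil =>
    match t, h with
    | node c pb (node d pa e), h =>
      cases h
      exact ⟨c, pb, d, pa, e, rfl, rfl⟩
  | cons a q ih =>
    cases t with
    | leaf => simp [rotateLeftAt] at h
    | node l v r =>
      cases a <;>
      · simp only [rotateLeftAt, Option.map_eq_some_iff] at h
        obtain ⟨s', hs, rfl⟩ := h
        obtain ⟨c, pb, d, pa, e, h1, rfl⟩ := ih hs
        exact ⟨c, pb, d, pa, e, h1, rfl⟩

theorem bump_concat (t : BTree α) (q : List Bool) (dir : Bool) :
    bump t (q ++ [dir]) = if dir then rotateLeftAt t q else rotateRightAt t q := by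
  obtain ⟨a, l, hq⟩ := List.exists_cons_of_ne_nil (List.concat_ne_nil dir q)
  rw [hq]
  simp only [bump]
  rw [← hq, List.getLastD_concat, List.dropLast_concat]

end Subtrees

section Weights

variable {t u u' : BTree ℝ} {q : List Bool}

theorem totalWeight_rotate (c d e : BTree ℝ) (pa pb : ℝ) :
    totalWeight (node c pb (node d pa e)) = totalWeight (node (node c pb d) pa e) := by
  simp only [totalWeight]
  ring

theorem totalWeight_replaceAt (h : subtreeAt t q = some u)
    (hw : totalWeight u' = totalWeight u) : totalWeight (replaceAt t q u') = totalWeight t := by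
  induction q generalizing t with
  | nil => simp_all [subtreeAt, replaceAt]
  | cons a q ih =>
    cases t with
    | leaf => simp [subtreeAt] at h
    | node l w r => cases a <;> simp_all [subtreeAt, replaceAt, totalWeight]

theorem weightD_replaceAt_of_not_prefix (h : subtreeAt t q = some u) {r : List Bool}
    (hr : ¬ q <+: r) : weightD (replaceAt t q u') r = weightD t r := by
  rw [weightD, weightAt_replaceAt_of_not_prefix h hr, weightD]

theorem subWeight_replaceAt (h : subtreeAt t q = some u)
    (hw : totalWeight u' = totalWeight u) {r : List Bool} (hr : q <+: r → r = q) :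
    subWeight (replaceAt t q u') r = subWeight t r := by
  induction q generalizing t r with
  | nil => simp_all [subWeight, subtreeAt, replaceAt]
  | cons a q ih =>
    cases t with
    | leaf => simp [subtreeAt] at h
    | node l w rr =>
      cases r with
      | nil =>
        cases a <;> simp only [subtreeAt] at h <;>
          simp [subWeight, subtreeAt, replaceAt, totalWeight, totalWeight_replaceAt h hw]
      | cons b r =>
        cases a <;> cases b
        · exact ih (t := l) h fun hq => by
            simpa using hr (List.cons_prefix_cons.mpr ⟨rfl, hq⟩)
        · rfl
        · rfl
        · exact ih (t := rr) h fun hq => by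
            simpa using hr (List.cons_prefix_cons.mpr ⟨rfl, hq⟩)

theorem subWeight_replaceAt_concat (h : subtreeAt t q = some u)
    (hw : totalWeight u' = totalWeight u) {r : List Bool} (hr : ¬ q <+: r) (b : Bool) :
    subWeight (replaceAt t q u') (r ++ [b]) = subWeight t (r ++ [b]) :=
  subWeight_replaceAt h hw fun hq => ((List.prefix_concat_iff.mp hq).resolve_right hr).symm

theorem meritAt_concat (t : BTree ℝ) (p : List Bool) (dir : Bool) :
    meritAt t (p ++ [dir]) = merit t p dir := by
  simp [meritAt]

theorem merit_congr {t' : BTree ℝ} {q' : List Bool} (h : subtreeAt t q = subtreeAt t' q')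
    (dir : Bool) : merit t q dir = merit t' q' dir := by
  simp only [merit, weightD, weightAt, subWeight, subtreeAt_append t q,
    subtreeAt_append t' q', h]

theorem meritAt_append_congr {t' : BTree ℝ} {q' s : List Bool}
    (h : subtreeAt t q = subtreeAt t' q') (hs : s ≠ []) :
    meritAt t (q ++ s) = meritAt t' (q' ++ s) := by
  obtain ⟨s, dir, rfl⟩ := (List.eq_nil_or_concat' s).resolve_left hs
  simp only [← List.append_assoc, meritAt_concat]
  exact merit_congr (by rw [subtreeAt_append, subtreeAt_append, h]) dir

theorem meritAt_replaceAt_append {v w s : List Bool} (h : subtreeAt t q = some u)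
    (hvw : subtreeAt u' v = subtreeAt u w) (hs : s ≠ []) :
    meritAt (replaceAt t q u') (q ++ v ++ s) = meritAt t (q ++ w ++ s) :=
  meritAt_append_congr (subtreeAt_replaceAt_append_eq h hvw) hs

theorem meritAt_replaceAt_of_not_prefix (h : subtreeAt t q = some u)
    (hw : totalWeight u' = totalWeight u) {p : List Bool} (hp : p ≠ []) (hq : ¬ q <+: p) :
    meritAt (replaceAt t q u') p = meritAt t p := by
  obtain ⟨p, dir, rfl⟩ := (List.eq_nil_or_concat' p).resolve_left hp
  have hq' : ¬ q <+: p := fun h' => hq (h'.trans (List.prefix_append p [dir]))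
  rw [meritAt_concat, meritAt_concat, merit, merit,
    show p ++ [dir, dir] = p ++ [dir] ++ [dir] by simp,
    weightD_replaceAt_of_not_prefix h hq, weightD_replaceAt_of_not_prefix h hq',
    subWeight_replaceAt_concat h hw hq, subWeight_replaceAt_concat h hw hq']

end Weights

end BTree

open BTree in
theorem merit_bump_general (T T' : BTree ℝ)
    (q : List Bool) (dir : Bool) (hbump : T.bump (q ++ [dir]) = some T') :
    -- non-root nodes outside the subtree rooted at `y` (this excludes `x`, `y`)
    (∀ p, p ≠ [] → ¬ q <+: p → meritAt T' p = meritAt T p) ∧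
    -- nodes strictly inside the like-minded subtree `λ(x)` (this excludes `c'`)
    (∀ s, s ≠ [] → meritAt T' (q ++ [dir] ++ s) = meritAt T (q ++ [dir, dir] ++ s)) ∧
    -- nodes strictly inside the middle subtree (this excludes `d'`)
    (∀ s, s ≠ [] → meritAt T' (q ++ [!dir, dir] ++ s) = meritAt T (q ++ [dir, !dir] ++ s)) ∧
    -- nodes strictly inside the sibling subtree `σ(x)` (this excludes `e'`)
    (∀ s, s ≠ [] → meritAt T' (q ++ [!dir, !dir] ++ s) = meritAt T (q ++ [!dir] ++ s)) := by
  rw [bump_concat] at hbump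
  -- each `rfl` below locates one of `c, d, e` in the rotated subtree and in the original one
  cases dir with
  | false =>
    obtain ⟨c, pb, d, pa, e, hsub, rfl⟩ := rotateRightAt_eq_some hbump
    exact ⟨fun p hp hq => meritAt_replaceAt_of_not_prefix hsub (totalWeight_rotate ..) hp hq,
      fun s hs => meritAt_replaceAt_append hsub rfl hs,
      fun s hs => meritAt_replaceAt_append hsub rfl hs,
      fun s hs => meritAt_replaceAt_append hsub rfl hs⟩
  | true =>
    obtain ⟨c, pb, d, pa, e, hsub, rfl⟩ := rotateLeftAt_eq_some hbump
    exact ⟨fun p hp hq => meritAt_replaceAt_of_not_prefix hsub (totalWeight_rotate ..).symm hp hq,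
      fun s hs => meritAt_replaceAt_append hsub rfl hs,
      fun s hs => meritAt_replaceAt_append hsub rfl hs,
      fun s hs => meritAt_replaceAt_append hsub rfl hs⟩

open BTree in
/-- Let `T` be a weighted binary tree and `x` the non-root
node addressed by `q ++ [dir]`, with parent `y = π(x)` addressed by `q`; let
`c'`, `d'`, `e'` be the roots (when present) of the three subtrees reattached
by the rotation performed when bumping `x` (addressed in `T^x` by
`q ++ [dir]`, `q ++ [!dir, dir]` and `q ++ [!dir, !dir]`, and in `T` by
`q ++ [dir, dir]`, `q ++ [dir, !dir]` and `q ++ [!dir]`).  Then for every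
non-root node `z` of `T` other than the (at most five) nodes
`x, y, c', d', e'`, the merit is unchanged: `μ(z, T^x) = μ(z, T)`. -/
theorem merit_bump (T T' : BTree ℝ) (hT : T.Weighted)
    (q : List Bool) (dir : Bool) (hbump : T.bump (q ++ [dir]) = some T') :
    -- non-root nodes outside the subtree rooted at `y` (this excludes `x`, `y`)
    (∀ p, p ≠ [] → ¬ q <+: p → meritAt T' p = meritAt T p) ∧
    -- nodes strictly inside the like-minded subtree `λ(x)` (this excludes `c'`)
    (∀ s, s ≠ [] → meritAt T' (q ++ [dir] ++ s) = meritAt T (q ++ [dir, dir] ++ s)) ∧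
    -- nodes strictly inside the middle subtree (this excludes `d'`)
    (∀ s, s ≠ [] → meritAt T' (q ++ [!dir, dir] ++ s) = meritAt T (q ++ [dir, !dir] ++ s)) ∧
    -- nodes strictly inside the sibling subtree `σ(x)` (this excludes `e'`)
    (∀ s, s ≠ [] → meritAt T' (q ++ [!dir, !dir] ++ s) = meritAt T (q ++ [!dir] ++ s)) :=
  merit_bump_general T T' q dir hbump
end
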